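/- arXiv:2208.04582 — 5 statements merged into one kernel-verified Lean document; each statement's English description precedes it below -/
import Mathlib

section
/- Let (a_j)_{j∈ℤ} be absolutely summable real coefficients and (Z_n)_{n∈ℤ} i.i.d. mean-zero random variables with finite second moment. Then the series X_n = Σ_{i∈ℤ} a_i Z_{n-i} converges in L² and almost surely, and defines a strictly stationary process with mean zero. -/
/-!
Since the `Z m` are identically distributed, the term `a i • Z (n - i)` has `Lᵖ` norm
`|a i| ‖Z 0‖ₚ`, so the series has summable `L²` norms: it converges in `L²` and almost surely,
and (taking `p = 1`) its expectation is computed termwise. Stationarity holds because `X` is a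
fixed measurable, shift-equivariant functional of the noise path `(Z m)ₘ`, whose law is the
shift-invariant product measure.
-/

open MeasureTheory ProbabilityTheory Filter Topology
open scoped ENNReal

section SeriesInLp

variable {Ω E ι : Type*} {_ : MeasurableSpace Ω} {μ : Measure Ω} [NormedAddCommGroup E]
  {p : ℝ≥0∞}

lemma tsum_eLpNorm_smul_ne_top {𝕜 : Type*} [NormedDivisionRing 𝕜] [Module 𝕜 E]
    [NormSMulClass 𝕜 E] {c : ι → 𝕜} (hc : Summable fun i => ‖c i‖) {f : ι → Ω → E}
    {C : ℝ≥0∞} (hC : C ≠ ∞) (hf : ∀ i, eLpNorm (f i) p μ ≤ C) :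
    ∑' i, eLpNorm (c i • f i) p μ ≠ ∞ := by
  refine ne_top_of_le_ne_top ?_ (ENNReal.tsum_le_tsum (g := fun i => ‖c i‖ₑ * C) fun i => ?_)
  · rw [ENNReal.tsum_mul_right]
    exact ENNReal.mul_ne_top (tsum_enorm_ne_top_iff_summable_norm.2 hc) hC
  · rw [eLpNorm_const_smul]
    gcongr
    exact hf i

lemma tendsto_eLpNorm_sum_sub_tsum [Fact (1 ≤ p)] [CompleteSpace E] [Countable ι]
    {f : ι → Ω → E} (hf : ∀ i, MemLp (f i) p μ) (hsum : ∑' i, eLpNorm (f i) p μ ≠ ∞) :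
    Tendsto (fun s : Finset ι => eLpNorm (fun ω => ∑ i ∈ s, f i ω - ∑' i, f i ω) p μ)
      atTop (𝓝 0) := by
  set F : ι → Lp E p μ := fun i => (hf i).toLp
  have hF : ∑' i, ‖F i‖ₑ ≠ ∞ := by simpa only [F, Lp.enorm_toLp] using hsum
  have hcoe : ⇑(∑' i, F i) =ᵐ[μ] fun ω => ∑' i, f i ω := by
    filter_upwards [Lp.coeFn_tsum hF, ae_all_iff.2 fun i => (hf i).coeFn_toLp] with ω hω hfω
    exact hω.trans (tsum_congr hfω)
  have hnorm (s : Finset ι) : eLpNorm (fun ω => ∑ i ∈ s, f i ω - ∑' i, f i ω) p μ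
      = ‖∑ i ∈ s, F i - ∑' i, F i‖ₑ := by
    rw [Lp.enorm_def]
    refine eLpNorm_congr_ae ?_
    filter_upwards [Lp.coeFn_sub (∑ i ∈ s, F i) (∑' i, F i), Lp.coeFn_fun_finsetSum s F, hcoe,
      ae_all_iff.2 fun i => (hf i).coeFn_toLp] with ω hsub hfinsum htsum hfω
    rw [hsub, Pi.sub_apply, hfinsum, htsum]
    simp only [F, hfω]
  simp_rw [hnorm]
  have h := ((Summable.of_enorm hF).hasSum.sub_const (∑' i, F i)).enorm
  rwa [sub_self, enorm_zero] at h

end SeriesInLp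

lemma ProbabilityTheory.iIndepFun.map_precomp_eq_map {Ω ι β : Type*} [MeasurableSpace Ω]
    [MeasurableSpace β] {P : Measure Ω} {Z : ι → Ω → β} (hmeas : ∀ i, Measurable (Z i))
    (hindep : iIndepFun Z P) {g : ι → ι} (hg : g.Injective)
    (hident : ∀ i, P.map (Z (g i)) = P.map (Z i)) :
    P.map (fun ω i => Z (g i) ω) = P.map (fun ω i => Z i ω) := by
  rw [(hindep.precomp hg).map_fun_eq_infinitePi_map fun i => hmeas (g i),
    hindep.map_fun_eq_infinitePi_map hmeas]
  simp_rw [hident]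

noncomputable def movingAverage (a z : ℤ → ℝ) (n : ℤ) : ℝ := ∑' i, a i * z (n - i)

lemma measurable_movingAverage (a : ℤ → ℝ) : Measurable (movingAverage a) :=
  measurable_pi_lambda _ fun n => Measurable.tsum fun i => by fun_prop

lemma movingAverage_shift (a z : ℤ → ℝ) (k n : ℤ) :
    movingAverage a (fun m => z (m + k)) n = movingAverage a z (n + k) := by
  simp only [movingAverage, sub_add_eq_add_sub]

lemma map_movingAverage_shift {Ω : Type*} [MeasurableSpace Ω] {P : Measure Ω} {Z : ℤ → Ω → ℝ}
    (hmeas : ∀ n, Measurable (Z n)) (hindep : iIndepFun Z P) (hident : ∀ n, P.map (Z n) = P.map (Z 0)) (a : ℤ → ℝ) (k : ℤ) :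
    P.map (fun ω n => movingAverage a (fun m => Z m ω) (n + k))
      = P.map (fun ω n => movingAverage a (fun m => Z m ω) n) := by
  have hshift : P.map (fun ω (m : ℤ) => Z (m + k) ω) = P.map (fun ω m => Z m ω) :=
    hindep.map_precomp_eq_map hmeas (add_left_injective k)
      fun m => (hident (m + k)).trans (hident m).symm
  simp_rw [← movingAverage_shift]
  change P.map (movingAverage a ∘ fun ω m => Z (m + k) ω)
    = P.map (movingAverage a ∘ fun ω m => Z m ω)
  rw [← Measure.map_map (measurable_movingAverage a) (measurable_pi_lambda _ fun m => hmeas _),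
    hshift, Measure.map_map (measurable_movingAverage a) (measurable_pi_lambda _ hmeas)]

/-- With absolutely summable coefficients and i.i.d. mean-zero
square-integrable noise, the two-sided moving average series
`X n = ∑_{i ∈ ℤ} a i * Z (n - i)` converges almost surely and in `L²`, and defines a
strictly stationary process with mean zero. -/
theorem movingAverage_converges_stationary
    {Ω : Type*} [MeasurableSpace Ω] (P : Measure Ω) [IsProbabilityMeasure P]
    (Z : ℤ → Ω → ℝ) (hmeas : ∀ n, Measurable (Z n))
    (hindep : iIndepFun Z P)
    (hident : ∀ n : ℤ, Measure.map (Z n) P = Measure.map (Z 0) P)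
    (hmean : (∫ ω, Z 0 ω ∂P) = 0)
    (hL2 : MemLp (Z 0) 2 P)
    (a : ℤ → ℝ) (ha : Summable (fun i : ℤ => |a i|))
    (X : ℤ → Ω → ℝ) (hX : ∀ n ω, X n ω = ∑' i : ℤ, a i * Z (n - i) ω) :
    -- almost sure (absolute) convergence of the series
    (∀ n : ℤ, ∀ᵐ ω ∂P, Summable (fun i : ℤ => a i * Z (n - i) ω)) ∧
    -- convergence in L² of the partial sums to X n
    (∀ n : ℤ, Tendsto
        (fun s : Finset ℤ =>
          eLpNorm (fun ω => (∑ i ∈ s, a i * Z (n - i) ω) - X n ω) 2 P)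
        atTop (𝓝 0)) ∧
    -- strict stationarity
    (∀ k : ℤ, Measure.map (fun ω => fun n : ℤ => X (n + k) ω) P
        = Measure.map (fun ω => fun n : ℤ => X n ω) P) ∧
    -- zero mean
    (∀ n : ℤ, (∫ ω, X n ω ∂P) = 0) := by
  have hZ (m : ℤ) : IdentDistrib (Z m) (Z 0) P P :=
    ⟨(hmeas m).aemeasurable, (hmeas 0).aemeasurable, hident m⟩
  have hterm (n i : ℤ) : MemLp (fun ω => a i * Z (n - i) ω) 2 P :=
    ((hZ (n - i)).memLp_iff.2 hL2).const_mul (a i)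
  have ha' : Summable fun i => ‖a i‖ := by simpa only [Real.norm_eq_abs] using ha
  have hnorms {p : ℝ≥0∞} (hp : MemLp (Z 0) p P) (n : ℤ) :
      ∑' i, eLpNorm (fun ω => a i * Z (n - i) ω) p P ≠ ∞ :=
    tsum_eLpNorm_smul_ne_top (f := fun i => Z (n - i)) ha' hp.eLpNorm_ne_top
      fun i => ((hZ (n - i)).eLpNorm_eq p).le
  refine ⟨fun n => ?_, fun n => ?_, fun k => ?_, fun n => ?_⟩
  · filter_upwards [summable_norm_of_tsum_eLpNorm_ne_top one_le_two
      (fun i => (hterm n i).1) (hnorms hL2 n)] with ω hω using hω.of_norm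
  · have : Fact ((1 : ℝ≥0∞) ≤ 2) := ⟨one_le_two⟩
    simpa only [hX] using tendsto_eLpNorm_sum_sub_tsum (hterm n) (hnorms hL2 n)
  · simpa only [hX, movingAverage] using map_movingAverage_shift hmeas hindep hident a k
  · have hL1 : ∑' i, ∫⁻ ω, ‖a i * Z (n - i) ω‖ₑ ∂P ≠ ∞ := by
      simpa only [eLpNorm_one_eq_lintegral_enorm] using hnorms (hL2.mono_exponent one_le_two) n
    simp only [hX, integral_tsum (fun i => (hterm n i).1) hL1, integral_const_mul,
      (hZ _).integral_eq, hmean, mul_zero, tsum_zero]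
end

section
/- With S_n = Σ_{i=0}^{n-1} X_i for the moving average X_n = Σ_i a_i Z_{n-i}, one has the decomposition S_n = Σ_{j=0}^{n-1}(A⁺_{n-1-j} + A⁻_j) Z_j + Σ_{j=n}^{∞}(A⁻_j − A⁻_{j-n}) Z_j + Σ_{j=1}^{∞}(A⁺_{j+n-1} − A⁺_{j-1}) Z_{-j}, where A⁻_n = Σ_{j=1}^{n} a_{-j} and A⁺_n = Σ_{j=0}^{n} a_j. -/
/-!
Reindexing each series by `k = m - i` and exchanging it with the finite sum over `m < n` gives
`S_n = ∑' k, c_k Z_k` with window sums `c_k = ∑_{m<n} a_{m-k}`. Splitting `ℤ` into `[0, n)`,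
`[n, ∞)` and the negative integers, each `c_k` is a sum or difference of two partial sums of `a`.
-/

open MeasureTheory ProbabilityTheory Finset

/-- `A⁺_n` -/
def partialSumPos {M : Type*} [AddCommMonoid M] (a : ℤ → M) (n : ℕ) : M :=
  ∑ j ∈ range (n + 1), a j

/-- `A⁻_n` -/
def partialSumNeg {M : Type*} [AddCommMonoid M] (a : ℤ → M) (n : ℕ) : M :=
  ∑ j ∈ range n, a (-(j + 1 : ℕ))

section WindowSums

variable {M : Type*} [AddCommGroup M] (a : ℤ → M) (n : ℕ)

theorem sum_range_comp_sub_of_lt {j : ℕ} (hj : j < n) :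
    ∑ i ∈ range n, a (i - j) = partialSumPos a (n - 1 - j) + partialSumNeg a j := by
  obtain ⟨m, rfl⟩ := Nat.exists_eq_add_of_lt hj
  have hm : j + m + 1 - 1 - j = m := by omega
  rw [hm, partialSumPos, partialSumNeg, add_assoc, sum_range_add, add_comm,
    ← sum_range_reflect (fun i : ℕ => a (-(i + 1 : ℕ))) j]
  congr 1 <;> refine sum_congr rfl fun i hi => congr_arg a ?_
  · push_cast; ring
  · rw [mem_range] at hi; push_cast [Nat.sub_sub]; omega

theorem sum_range_comp_sub_natCast_add (k : ℕ) :
    ∑ i ∈ range n, a (i - (n + k)) = partialSumNeg a (n + k) - partialSumNeg a k := by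
  rw [partialSumNeg, partialSumNeg, add_comm n k, sum_range_add_sub_sum_range,
    ← sum_range_reflect]
  refine sum_congr rfl fun i hi => congr_arg a ?_
  rw [mem_range] at hi; push_cast [Nat.sub_sub]; omega

theorem sum_range_comp_sub_neg_succ (k : ℕ) :
    ∑ i ∈ range n, a (i - -(k + 1 : ℕ)) = partialSumPos a (k + n) - partialSumPos a k := by
  rw [partialSumPos, partialSumPos, add_right_comm, sum_range_add_sub_sum_range]
  refine sum_congr rfl fun i _ => congr_arg a ?_
  push_cast; ring

end WindowSums

theorem tsum_int_eq_sum_range_add_tsum_add_tsum_neg {G : Type*} [AddCommGroup G] [UniformSpace G]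
    [IsUniformAddGroup G] [CompleteSpace G] [T2Space G] {f : ℤ → G} (hf : Summable f) (n : ℕ) :
    ∑' k : ℤ, f k
      = ∑ k ∈ range n, f k + ∑' k : ℕ, f (n + k) + ∑' k : ℕ, f (-(k + 1 : ℕ)) := by
  have hpos : Summable fun k : ℕ => f k := hf.comp_injective Nat.cast_injective
  have hneg : Summable fun k : ℕ => f (-(k + 1)) :=
    hf.comp_injective fun _ _ h => by simpa using h
  rw [tsum_of_nat_of_neg_add_one hpos hneg, ← hpos.sum_add_tsum_nat_add n]
  push_cast
  simp only [add_comm (n : ℤ)]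

section Convolution

variable {R : Type*} [NonUnitalNonAssocSemiring R] [TopologicalSpace R] (a z : ℤ → R)

theorem tsum_mul_comp_sub_eq (m : ℤ) :
    ∑' i, a i * z (m - i) = ∑' k, a (m - k) * z k := by
  rw [← (Equiv.subLeft m).tsum_eq]
  simp only [Equiv.subLeft_apply, sub_sub_cancel]

theorem summable_mul_comp_sub_iff (m : ℤ) :
    Summable (fun i => a i * z (m - i)) ↔ Summable (fun k => a (m - k) * z k) := by
  rw [← (Equiv.subLeft m).summable_iff]
  simp only [Function.comp_def, Equiv.subLeft_apply, sub_sub_cancel]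

variable [IsTopologicalSemiring R] {a z}

theorem summable_sum_range_comp_sub_mul (hz : ∀ m, Summable fun i => a i * z (m - i)) (n : ℕ) :
    Summable fun k => (∑ m ∈ range n, a (m - k)) * z k := by
  simp only [sum_mul]
  exact summable_sum fun m _ => (summable_mul_comp_sub_iff a z m).mp (hz m)

theorem sum_range_tsum_mul_comp_sub [T2Space R] (hz : ∀ m, Summable fun i => a i * z (m - i))
    (n : ℕ) :
    ∑ m ∈ range n, ∑' i, a i * z (m - i) = ∑' k, (∑ m ∈ range n, a (m - k)) * z k := by
  simp only [tsum_mul_comp_sub_eq, sum_mul]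
  exact (Summable.tsum_finsetSum fun (m : ℕ) _ => (summable_mul_comp_sub_iff a z m).mp (hz m)).symm

end Convolution

theorem sum_range_tsum_mul_comp_sub_eq_partialSums {R : Type*} [NormedRing R] [CompleteSpace R]
    {a z : ℤ → R} (hz : ∀ m, Summable fun i => a i * z (m - i)) (n : ℕ) :
    ∑ m ∈ range n, ∑' i, a i * z (m - i)
      = ∑ j ∈ range n, (partialSumPos a (n - 1 - j) + partialSumNeg a j) * z j
        + ∑' k : ℕ, (partialSumNeg a (n + k) - partialSumNeg a k) * z (n + k)
        + ∑' k : ℕ, (partialSumPos a (k + n) - partialSumPos a k) * z (-(k + 1 : ℕ)) := by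
  rw [sum_range_tsum_mul_comp_sub hz,
    tsum_int_eq_sum_range_add_tsum_add_tsum_neg (summable_sum_range_comp_sub_mul hz n) n,
    sum_congr rfl fun j hj => by rw [sum_range_comp_sub_of_lt a n (mem_range.mp hj)]]
  simp only [sum_range_comp_sub_natCast_add, sum_range_comp_sub_neg_succ]

theorem movingAverage_partialSum_decomposition_general
    {Ω : Type*} [MeasurableSpace Ω] (P : Measure Ω)
    (Z : ℤ → Ω → ℝ)
    (a : ℤ → ℝ)
    (hsum : ∀ᵐ ω ∂P, ∀ n : ℤ, Summable (fun i : ℤ => a i * Z (n - i) ω))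
    (X : ℤ → Ω → ℝ) (hX : ∀ n ω, X n ω = ∑' i : ℤ, a i * Z (n - i) ω)
    (Ap Am : ℕ → ℝ)
    (hAp : ∀ n, Ap n = ∑ j ∈ Finset.range (n + 1), a j)
    (hAm : ∀ n, Am n = ∑ j ∈ Finset.range n, a (-(j + 1 : ℕ)))
    (n : ℕ) :
    ∀ᵐ ω ∂P,
      (∑ i ∈ Finset.range n, X i ω)
        = (∑ j ∈ Finset.range n, (Ap (n - 1 - j) + Am j) * Z j ω)
          + (∑' k : ℕ, (Am (n + k) - Am k) * Z (n + k) ω)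
          + (∑' k : ℕ, (Ap (k + n) - Ap k) * Z (-(k + 1 : ℕ)) ω) := by
  obtain rfl : Ap = partialSumPos a := funext hAp
  obtain rfl : Am = partialSumNeg a := funext hAm
  filter_upwards [hsum] with ω hω
  simp only [hX]
  exact sum_range_tsum_mul_comp_sub_eq_partialSums (z := fun k => Z k ω) hω n

/-- Decomposition of the partial sum `S_n = ∑_{i=0}^{n-1} X_i` of a
moving average in terms of the noise variables, where `A⁻_n = ∑_{j=1}^{n} a_{-j}` and
`A⁺_n = ∑_{j=0}^{n} a_j`:
`S_n = ∑_{j=0}^{n-1}(A⁺_{n-1-j} + A⁻_j) Z_j + ∑_{j=n}^{∞}(A⁻_j − A⁻_{j-n}) Z_j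
     + ∑_{j=1}^{∞}(A⁺_{j+n-1} − A⁺_{j-1}) Z_{-j}`, almost surely. -/
theorem movingAverage_partialSum_decomposition
    {Ω : Type*} [MeasurableSpace Ω] (P : Measure Ω) [IsProbabilityMeasure P]
    (Z : ℤ → Ω → ℝ) (hmeas : ∀ n, Measurable (Z n))
    (hindep : iIndepFun Z P)
    (hident : ∀ n : ℤ, Measure.map (Z n) P = Measure.map (Z 0) P)
    (hmean : (∫ ω, Z 0 ω ∂P) = 0) (hL2 : MemLp (Z 0) 2 P)
    (a : ℤ → ℝ) (ha : Summable (fun i : ℤ => |a i|))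
    (hsum : ∀ᵐ ω ∂P, ∀ n : ℤ, Summable (fun i : ℤ => a i * Z (n - i) ω))
    (X : ℤ → Ω → ℝ) (hX : ∀ n ω, X n ω = ∑' i : ℤ, a i * Z (n - i) ω)
    (Ap Am : ℕ → ℝ)
    (hAp : ∀ n, Ap n = ∑ j ∈ Finset.range (n + 1), a j)
    (hAm : ∀ n, Am n = ∑ j ∈ Finset.range n, a (-(j + 1 : ℕ)))
    (n : ℕ) :
    ∀ᵐ ω ∂P,
      (∑ i ∈ Finset.range n, X i ω)
        = (∑ j ∈ Finset.range n, (Ap (n - 1 - j) + Am j) * Z j ω)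
          + (∑' k : ℕ, (Am (n + k) - Am k) * Z (n + k) ω)
          + (∑' k : ℕ, (Ap (k + n) - Ap k) * Z (-(k + 1 : ℕ)) ω) :=
  movingAverage_partialSum_decomposition_general P Z a hsum X hX Ap Am hAp hAm n
end

section
/- In the i.i.d. case (a_0 = 1, a_i = 0 for i ≠ 0), the limiting cluster indicator process satisfies: V_j(ε) = 1(T* ≥ R_j) for j ≥ 1 and V_j(ε) = 1(T* ≥ R'_{-j}) for j ≤ −1, where (R_j) and (R'_j) are two independent random walks, each with step distribution equal to the law of A − B with A ∼ G_{τ(ε)} and B ∼ F_Z independent, and T* is an independent exponential random variable with rate τ(ε). -/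
/-!
In the i.i.d. case the cluster indicators are, by definition, indicators of the events
`{R_j ≤ T*}` and `{R'_j ≤ T*}`, so the content lies in the joint law. The `j`-th step of either
walk is a measurable function of the pair `(Z_k^-, Z_k^+)` for a single index `k`, distinct steps
use disjoint pairs and `T*` uses none of them, so the steps and `T*` are independent (functions of
disjoint blocks of independent variables are independent). Each step is the difference of two
independent variables, one with law `G_τ` and one with law `F_Z`, hence has the law of `A - B`.
-/

open MeasureTheory ProbabilityTheory

namespace ProbabilityTheory

variable {Ω ι κ : Type*} {mΩ : MeasurableSpace Ω} {μ : Measure Ω}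

theorem iIndep.iSup_fiber {m : ι → MeasurableSpace Ω} (h_le : ∀ i, m i ≤ mΩ)
    (h : iIndep m μ) (c : ι → κ) : iIndep (fun j => ⨆ i ∈ c ⁻¹' {j}, m i) μ := by
  classical
  have := h.isProbabilityMeasure
  rw [iIndep_iff]
  intro S s hs
  induction S using Finset.induction_on with
  | empty => simp
  | insert a S ha ih =>
    have hdisj : Disjoint (c ⁻¹' {a}) (c ⁻¹' S) :=
      (Set.disjoint_singleton_left.2 (by exact_mod_cast ha)).preimage c
    have hS : MeasurableSet[⨆ i ∈ c ⁻¹' S, m i] (⋂ j ∈ S, s j) :=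
      S.measurableSet_biInter fun j hj =>
        (biSup_mono (fun i (hi : c i = j) => (hi ▸ hj : c i ∈ S)) :
          ⨆ i ∈ c ⁻¹' {j}, m i ≤ ⨆ i ∈ c ⁻¹' S, m i) _
          (hs j (Finset.mem_insert_of_mem hj))
    rw [Finset.set_biInter_insert, Finset.prod_insert ha,
      (Indep_iff _ _ _).1 (indep_iSup_of_disjoint h_le h hdisj) _ _
        (hs a (Finset.mem_insert_self a S)) hS,
      ih fun j hj => hs j (Finset.mem_insert_of_mem hj)]

section Functions

variable {β : ι → Type*} {mβ : ∀ i, MeasurableSpace (β i)} {f : ∀ i, Ω → β i}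

theorem measurable_iSup_comap_of_mem {s : Set ι} {i : ι} (hi : i ∈ s) :
    Measurable[⨆ i ∈ s, (mβ i).comap (f i)] (f i) :=
  Measurable.of_comap_le (le_iSup₂ (f := fun i (_ : i ∈ s) => (mβ i).comap (f i)) i hi)

theorem iIndepFun.of_measurable_iSup_fiber {γ : κ → Type*} {mγ : ∀ j, MeasurableSpace (γ j)}
    (hf : iIndepFun f μ) (hfm : ∀ i, Measurable (f i)) (c : ι → κ) {g : ∀ j, Ω → γ j}
    (hg : ∀ j, Measurable[⨆ i ∈ c ⁻¹' {j}, (mβ i).comap (f i)] (g j)) :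
    iIndepFun g μ := by
  rw [iIndepFun_iff_iIndep] at hf ⊢
  exact iIndep_of_iIndep_of_le (hf.iSup_fiber (fun i => (hfm i).comap_le) c)
    fun j => (hg j).comap_le

end Functions

theorem IndepFun.map_eq_map_prod {α β γ : Type*} {mα : MeasurableSpace α}
    {mβ : MeasurableSpace β} {mγ : MeasurableSpace γ} [IsFiniteMeasure μ] {X : Ω → α}
    {Y : Ω → β} {g : α × β → γ} (hXY : IndepFun X Y μ) (hX : Measurable X)
    (hY : Measurable Y) (hg : Measurable g) :
    μ.map (fun ω => g (X ω, Y ω)) = ((μ.map X).prod (μ.map Y)).map g := by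
  rw [← hXY.map_prod_eq_prod_map_map hX.aemeasurable hY.aemeasurable,
    Measure.map_map hg (hX.prodMk hY)]
  rfl

end ProbabilityTheory

/-- The step that the pair `(Z_k^-, Z_k^+)` feeds: step `k` of `R` for `k ≥ 0`, step `-k - 1` of
`R'` for `k < 0`; `T*` forms a block of its own. -/
def stepIndex : (Bool × ℤ) ⊕ Unit → (Bool × ℕ) ⊕ Unit :=
  Sum.map (fun p => if 0 ≤ p.2 then (true, p.2.toNat) else (false, (-p.2 - 1).toNat)) id

theorem iIndepFun_walk_steps {Ω : Type*} [MeasurableSpace Ω] {P : Measure Ω}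
    {Zm Zp : ℤ → Ω → ℝ} {T : Ω → ℝ} (hZm : ∀ k, Measurable (Zm k))
    (hZp : ∀ k, Measurable (Zp k)) (hT : Measurable T)
    (h : iIndepFun (Sum.elim (fun p : Bool × ℤ => if p.1 then Zp p.2 else Zm p.2)
      (fun _ : Unit => T)) P) :
    iIndepFun (Sum.elim
      (fun p : Bool × ℕ =>
        if p.1 then fun ω => Zm (p.2 : ℤ) ω - Zp (p.2 : ℤ) ω
        else fun ω => Zp (-(p.2 + 1 : ℕ) : ℤ) ω - Zm (-(p.2 + 1 : ℕ) : ℤ) ω)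
      (fun _ : Unit => T)) P := by
  set F := Sum.elim (fun p : Bool × ℤ => if p.1 then Zp p.2 else Zm p.2) (fun _ : Unit => T)
  have hblock {i : (Bool × ℤ) ⊕ Unit} {j} (hij : stepIndex i = j) :
      Measurable[⨆ i ∈ stepIndex ⁻¹' {j}, MeasurableSpace.comap (F i) inferInstance] (F i) :=
    measurable_iSup_comap_of_mem hij
  refine h.of_measurable_iSup_fiber ?_ stepIndex ?_
  · rintro (⟨_ | _, k⟩ | ⟨⟩)
    exacts [hZm k, hZp k, hT]
  · rintro (⟨_ | _, n⟩ | u)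
    · have hn : ∀ b, stepIndex (.inl (b, -((n + 1 : ℕ) : ℤ))) = .inl (false, n) := by
        simp [stepIndex]
        omega
      exact (hblock (hn true)).sub (hblock (hn false))
    · have hn : ∀ b, stepIndex (.inl (b, (n : ℤ))) = .inl (true, n) := by simp [stepIndex]
      exact (hblock (hn false)).sub (hblock (hn true))
    · exact hblock (i := Sum.inr u) rfl

theorem iid_case_cluster_indicators_random_walks_general
    {Ω : Type*} [MeasurableSpace Ω] (P : Measure Ω)
    (μ : Measure ℝ)
    (tilt : ℝ → Measure ℝ)
    (τ : ℝ)
    -- the tilted noise variables `Z_j^-` (`= U_j^-`) and `Z_j^+` (`= U_j^+`), and `T*`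
    (Zm Zp : ℤ → Ω → ℝ) (Tstar : Ω → ℝ)
    (hZmmeas : ∀ j, Measurable (Zm j)) (hZpmeas : ∀ j, Measurable (Zp j))
    (hTmeas : Measurable Tstar)
    (hindep : iIndepFun
      (Sum.elim (fun p : Bool × ℤ => if p.1 then Zp p.2 else Zm p.2)
        (fun _ : Unit => Tstar)) P)
    (hZm_neg : ∀ j : ℕ, 1 ≤ j → Measure.map (Zm (-(j : ℤ))) P = μ)
    (hZm_pos : ∀ j : ℕ, Measure.map (Zm (j : ℤ)) P = tilt τ)
    (hZp_neg : ∀ j : ℕ, 1 ≤ j → Measure.map (Zp (-(j : ℤ))) P = tilt τ)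
    (hZp_pos : ∀ j : ℕ, Measure.map (Zp (j : ℤ)) P = μ)
    -- the limiting cluster indicators, specialized to the i.i.d. case
    (V : ℤ → Ω → ℝ)
    (hVpos : ∀ (j : ℕ) (ω : Ω), 1 ≤ j → V (j : ℤ) ω =
      if (∑ i ∈ Finset.range j, (Zm (i : ℤ) ω - Zp (i : ℤ) ω)) ≤ Tstar ω
      then 1 else 0)
    (hVneg : ∀ (j : ℕ) (ω : Ω), 1 ≤ j → V (-(j : ℤ)) ω =
      if (∑ i ∈ Finset.range j, (Zp (-(i + 1 : ℕ) : ℤ) ω - Zm (-(i + 1 : ℕ) : ℤ) ω))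
          ≤ Tstar ω
      then 1 else 0)
    -- the two random walks
    (R R' : ℕ → Ω → ℝ)
    (hR : ∀ j ω, R j ω = ∑ i ∈ Finset.range j, (Zm (i : ℤ) ω - Zp (i : ℤ) ω))
    (hR' : ∀ j ω, R' j ω =
      ∑ i ∈ Finset.range j, (Zp (-(i + 1 : ℕ) : ℤ) ω - Zm (-(i + 1 : ℕ) : ℤ) ω)) :
    -- the indicator identities
    (∀ (j : ℕ) (ω : Ω), 1 ≤ j →
        V (j : ℤ) ω = if R j ω ≤ Tstar ω then 1 else 0) ∧
    (∀ (j : ℕ) (ω : Ω), 1 ≤ j →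
        V (-(j : ℤ)) ω = if R' j ω ≤ Tstar ω then 1 else 0) ∧
    -- the step sequences of the two walks together with `T*` are independent ...
    iIndepFun
      (Sum.elim
        (fun p : Bool × ℕ =>
          if p.1 then fun ω => Zm (p.2 : ℤ) ω - Zp (p.2 : ℤ) ω
          else fun ω => Zp (-(p.2 + 1 : ℕ) : ℤ) ω - Zm (-(p.2 + 1 : ℕ) : ℤ) ω)
        (fun _ : Unit => Tstar)) P ∧
    -- ... and every step has the law of `A − B`, `A ∼ G_{τ(ε)}`, `B ∼ F_Z`
    (∀ i : ℕ,
      Measure.map (fun ω => Zm (i : ℤ) ω - Zp (i : ℤ) ω) P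
        = Measure.map (fun p : ℝ × ℝ => p.1 - p.2) ((tilt τ).prod μ)) ∧
    (∀ i : ℕ,
      Measure.map (fun ω => Zp (-(i + 1 : ℕ) : ℤ) ω - Zm (-(i + 1 : ℕ) : ℤ) ω) P
        = Measure.map (fun p : ℝ × ℝ => p.1 - p.2) ((tilt τ).prod μ)) := by
  have := hindep.isProbabilityMeasure
  have hpair : ∀ k, IndepFun (Zm k) (Zp k) P := fun k =>
    hindep.indepFun (i := Sum.inl (false, k)) (j := Sum.inl (true, k)) (by simp)
  have hdiff : Measurable fun p : ℝ × ℝ => p.1 - p.2 := measurable_fst.sub measurable_snd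
  refine ⟨fun j ω hj => by rw [hR, hVpos j ω hj], fun j ω hj => by rw [hR', hVneg j ω hj],
    iIndepFun_walk_steps hZmmeas hZpmeas hTmeas hindep, fun i => ?_, fun i => ?_⟩
  · rw [← hZm_pos i, ← hZp_pos i]
    exact (hpair i).map_eq_map_prod (hZmmeas _) (hZpmeas _) hdiff
  · rw [← hZp_neg (i + 1) (by omega), ← hZm_neg (i + 1) (by omega)]
    exact (hpair _).symm.map_eq_map_prod (hZpmeas _) (hZmmeas _) hdiff

/-- In the i.i.d. case (`a₀ = 1`, `a_i = 0` otherwise) the limiting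
cluster indicators satisfy `V_j(ε) = 1(T* ≥ R_j)` for `j ≥ 1` and
`V_j(ε) = 1(T* ≥ R'_{-j})` for `j ≤ −1`, where `R` and `R'` are two independent
random walks whose steps are i.i.d. with the law of `A − B`, `A ∼ G_{τ(ε)}`,
`B ∼ F_Z` independent, and `T*` is an independent exponential variable with rate
`τ(ε)`. -/
theorem iid_case_cluster_indicators_random_walks
    {Ω : Type*} [MeasurableSpace Ω] (P : Measure Ω) [IsProbabilityMeasure P]
    (μ : Measure ℝ) [IsProbabilityMeasure μ]
    (hexp : ∀ t : ℝ, Integrable (fun z => Real.exp (t * z)) μ)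
    (hmean : (∫ z, z ∂μ) = 0) (hnondeg : ∀ c : ℝ, μ ≠ Measure.dirac c)
    (φ : ℝ → ℝ) (hφ : ∀ t, φ t = Real.log (∫ z, Real.exp (t * z) ∂μ))
    (tilt : ℝ → Measure ℝ)
    (htilt : ∀ θ, tilt θ =
      μ.withDensity fun x => ENNReal.ofReal (Real.exp (-φ θ + θ * x)))
    (ε τ : ℝ) (hεpos : 0 < ε) (hτpos : 0 < τ) (hτ : deriv φ τ = ε)
    -- the tilted noise variables `Z_j^-` (`= U_j^-`) and `Z_j^+` (`= U_j^+`), and `T*`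
    (Zm Zp : ℤ → Ω → ℝ) (Tstar : Ω → ℝ)
    (hZmmeas : ∀ j, Measurable (Zm j)) (hZpmeas : ∀ j, Measurable (Zp j))
    (hTmeas : Measurable Tstar)
    (hindep : iIndepFun
      (Sum.elim (fun p : Bool × ℤ => if p.1 then Zp p.2 else Zm p.2)
        (fun _ : Unit => Tstar)) P)
    (hZm_neg : ∀ j : ℕ, 1 ≤ j → Measure.map (Zm (-(j : ℤ))) P = μ)
    (hZm_pos : ∀ j : ℕ, Measure.map (Zm (j : ℤ)) P = tilt τ)
    (hZp_neg : ∀ j : ℕ, 1 ≤ j → Measure.map (Zp (-(j : ℤ))) P = tilt τ)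
    (hZp_pos : ∀ j : ℕ, Measure.map (Zp (j : ℤ)) P = μ)
    (hTstar : ∀ x : ℝ, 0 ≤ x →
      (P {ω | x < Tstar ω}).toReal = Real.exp (-τ * x))
    -- the limiting cluster indicators, specialized to the i.i.d. case
    (V : ℤ → Ω → ℝ)
    (hVpos : ∀ (j : ℕ) (ω : Ω), 1 ≤ j → V (j : ℤ) ω =
      if (∑ i ∈ Finset.range j, (Zm (i : ℤ) ω - Zp (i : ℤ) ω)) ≤ Tstar ω
      then 1 else 0)
    (hVneg : ∀ (j : ℕ) (ω : Ω), 1 ≤ j → V (-(j : ℤ)) ω =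
      if (∑ i ∈ Finset.range j, (Zp (-(i + 1 : ℕ) : ℤ) ω - Zm (-(i + 1 : ℕ) : ℤ) ω))
          ≤ Tstar ω
      then 1 else 0)
    -- the two random walks
    (R R' : ℕ → Ω → ℝ)
    (hR : ∀ j ω, R j ω = ∑ i ∈ Finset.range j, (Zm (i : ℤ) ω - Zp (i : ℤ) ω))
    (hR' : ∀ j ω, R' j ω =
      ∑ i ∈ Finset.range j, (Zp (-(i + 1 : ℕ) : ℤ) ω - Zm (-(i + 1 : ℕ) : ℤ) ω)) :
    -- the indicator identities
    (∀ (j : ℕ) (ω : Ω), 1 ≤ j →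
        V (j : ℤ) ω = if R j ω ≤ Tstar ω then 1 else 0) ∧
    (∀ (j : ℕ) (ω : Ω), 1 ≤ j →
        V (-(j : ℤ)) ω = if R' j ω ≤ Tstar ω then 1 else 0) ∧
    -- the step sequences of the two walks together with `T*` are independent ...
    iIndepFun
      (Sum.elim
        (fun p : Bool × ℕ =>
          if p.1 then fun ω => Zm (p.2 : ℤ) ω - Zp (p.2 : ℤ) ω
          else fun ω => Zp (-(p.2 + 1 : ℕ) : ℤ) ω - Zm (-(p.2 + 1 : ℕ) : ℤ) ω)
        (fun _ : Unit => Tstar)) P ∧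
    -- ... and every step has the law of `A − B`, `A ∼ G_{τ(ε)}`, `B ∼ F_Z`
    (∀ i : ℕ,
      Measure.map (fun ω => Zm (i : ℤ) ω - Zp (i : ℤ) ω) P
        = Measure.map (fun p : ℝ × ℝ => p.1 - p.2) ((tilt τ).prod μ)) ∧
    (∀ i : ℕ,
      Measure.map (fun ω => Zp (-(i + 1 : ℕ) : ℤ) ω - Zm (-(i + 1 : ℕ) : ℤ) ω) P
        = Measure.map (fun p : ℝ × ℝ => p.1 - p.2) ((tilt τ).prod μ)) :=
  iid_case_cluster_indicators_random_walks_general P μ tilt τ Zm Zp Tstar hZmmeas hZpmeas hTmeas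
    hindep hZm_neg hZm_pos hZp_neg hZp_pos V hVpos hVneg R R' hR hR'
end

section
/- Let (a_i) be absolutely summable with A = Σ_i a_i, and let (Z_k) be independent random variables whose variances converge uniformly to σ² and whose means are uniformly bounded. Then Var(Σ_{k=0}^{m}(A⁺_{m-k} + A⁻_k) Z_k) ∼ m σ² A² as m → ∞, where A⁺_n = Σ_{j=0}^{n} a_j and A⁻_n = Σ_{j=1}^{n} a_{-j}. -/
open MeasureTheory ProbabilityTheory Filter Topology Finset

/-!
By independence the variance is `∑_{k ≤ m} c_{m,k}² Var Z_k` with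
`c_{m,k} = A⁺_{m-k} + A⁻_k`. Writing `c_{m,k}² Var Z_k - A² σ²` as a combination of
`A⁺_{m-k} - A⁺_∞`, `A⁻_k - A⁻_∞` and `Var Z_k - σ²` bounds the error by a null sequence in `m - k`
plus a null sequence in `k`, and Cesàro averaging of these gives the limit `A² σ²`.
-/

theorem ProbabilityTheory.iIndepFun.variance_sum_mul {Ω ι : Type*} [MeasurableSpace Ω]
    {P : Measure Ω} {Z : ι → Ω → ℝ} (hindep : iIndepFun Z P) {s : Finset ι}
    (hL2 : ∀ k ∈ s, MemLp (Z k) 2 P) (c : ι → ℝ) :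
    variance (fun ω => ∑ k ∈ s, c k * Z k ω) P = ∑ k ∈ s, c k ^ 2 * variance (Z k) P := by
  have hfun : (fun ω => ∑ k ∈ s, c k * Z k ω) = ∑ k ∈ s, c k • Z k := by
    funext ω
    simp [Finset.sum_apply]
  rw [hfun, IndepFun.variance_sum (fun k hk => (hL2 k hk).const_smul (c k))]
  · exact sum_congr rfl fun k _ => variance_smul _ _ _
  · intro i _ j _ hij
    exact (hindep.indepFun hij).comp (measurable_const_mul (c i)) (measurable_const_mul (c j))

theorem Filter.Tendsto.sum_range_succ_div_natCast {u : ℕ → ℝ} {l : ℝ}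
    (h : Tendsto u atTop (𝓝 l)) :
    Tendsto (fun m : ℕ => (∑ k ∈ range (m + 1), u k) / m) atTop (𝓝 l) := by
  have hsucc : Tendsto (fun m : ℕ => ((m : ℝ) + 1) / m) atTop (𝓝 1) := by
    simpa [add_comm] using tendsto_add_mul_div_add_mul_atTop_nhds (1 : ℝ) 0 1 one_ne_zero
  have hcesaro := h.cesaro.comp (tendsto_add_atTop_nat 1)
  refine (one_mul l ▸ hsucc.mul hcesaro).congr fun m => ?_
  simp only [Function.comp_apply, Nat.cast_add, Nat.cast_one]
  field_simp

theorem tendsto_sum_range_sub_div_of_abs_sub_le {g : ℕ → ℕ → ℝ} {α β : ℕ → ℝ} {L : ℝ}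
    (hα : Tendsto α atTop (𝓝 0)) (hβ : Tendsto β atTop (𝓝 0))
    (hg : ∀ i j, |g i j - L| ≤ α i + β j) :
    Tendsto (fun m : ℕ => (∑ k ∈ range (m + 1), g (m - k) k) / m) atTop (𝓝 L) := by
  have herr : Tendsto (fun m : ℕ => (∑ k ∈ range (m + 1), g (m - k) k) / m
      - (∑ k ∈ range (m + 1), L) / m) atTop (𝓝 0) := by
    refine squeeze_zero_norm (fun m => ?_)
      (zero_add (0 : ℝ) ▸ hα.sum_range_succ_div_natCast.add hβ.sum_range_succ_div_natCast)
    have hreflect : ∑ k ∈ range (m + 1), α (m - k) = ∑ k ∈ range (m + 1), α k := by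
      simpa using sum_range_reflect α (m + 1)
    rw [Real.norm_eq_abs, ← sub_div, ← sum_sub_distrib, abs_div, Nat.abs_cast, ← add_div,
      ← hreflect, ← sum_add_distrib]
    gcongr
    exact (abs_sum_le_sum_abs _ _).trans (sum_le_sum fun k _ => hg _ _)
  simpa using herr.add (tendsto_const_nhds (x := L)).sum_range_succ_div_natCast

theorem abs_sq_mul_sub_sq_mul_le {c C v s B V : ℝ} (hc : |c| ≤ B) (hv : |v| ≤ V) :
    |c ^ 2 * v - C ^ 2 * s| ≤ (B + |C|) * V * |c - C| + C ^ 2 * |v - s| := by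
  calc |c ^ 2 * v - C ^ 2 * s| = |(c - C) * (c + C) * v + C ^ 2 * (v - s)| := by ring_nf
    _ ≤ |c - C| * |c + C| * |v| + C ^ 2 * |v - s| := by
        refine (abs_add_le _ _).trans_eq ?_
        rw [abs_mul, abs_mul, abs_mul, abs_of_nonneg (sq_nonneg C)]
    _ ≤ |c - C| * (B + |C|) * V + C ^ 2 * |v - s| := by
        have hcC : |c + C| ≤ B + |C| := (abs_add_le c C).trans (by gcongr)
        have hB : 0 ≤ B + |C| := (abs_nonneg _).trans hcC
        gcongr
    _ = (B + |C|) * V * |c - C| + C ^ 2 * |v - s| := by ring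

theorem tendsto_sum_range_sq_add_mul_div {p q v : ℕ → ℝ} {P Q s : ℝ}
    (hp : Tendsto p atTop (𝓝 P)) (hq : Tendsto q atTop (𝓝 Q)) (hv : Tendsto v atTop (𝓝 s)) :
    Tendsto (fun m : ℕ => (∑ k ∈ range (m + 1), (p (m - k) + q k) ^ 2 * v k) / m) atTop
      (𝓝 ((P + Q) ^ 2 * s)) := by
  obtain ⟨Bp, hBp⟩ := hp.abs.bddAbove_range
  obtain ⟨Bq, hBq⟩ := hq.abs.bddAbove_range
  obtain ⟨V, hV⟩ := hv.abs.bddAbove_range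
  set K := (Bp + Bq + |P + Q|) * V
  have hK : 0 ≤ K := by
    have := (abs_nonneg (p 0)).trans (hBp ⟨0, rfl⟩)
    have := (abs_nonneg (q 0)).trans (hBq ⟨0, rfl⟩)
    have := (abs_nonneg (v 0)).trans (hV ⟨0, rfl⟩)
    positivity
  refine tendsto_sum_range_sub_div_of_abs_sub_le (g := fun i j => (p i + q j) ^ 2 * v j)
    (α := fun i => K * |p i - P|)
    (β := fun j => K * |q j - Q| + (P + Q) ^ 2 * |v j - s|) ?_ ?_ fun i j => ?_
  · simpa using ((hp.sub_const P).abs.const_mul K)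
  · simpa using ((hq.sub_const Q).abs.const_mul K).add ((hv.sub_const s).abs.const_mul _)
  · have hpq : |p i + q j| ≤ Bp + Bq :=
      (abs_add_le _ _).trans (add_le_add (hBp ⟨i, rfl⟩) (hBq ⟨j, rfl⟩))
    calc |(p i + q j) ^ 2 * v j - (P + Q) ^ 2 * s|
        ≤ K * |(p i - P) + (q j - Q)| + (P + Q) ^ 2 * |v j - s| := by
          have := abs_sq_mul_sub_sq_mul_le (C := P + Q) (s := s) hpq (hV ⟨j, rfl⟩)
          rwa [add_sub_add_comm] at this
      _ ≤ K * (|p i - P| + |q j - Q|) + (P + Q) ^ 2 * |v j - s| := by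
          gcongr
          exact abs_add_le _ _
      _ = K * |p i - P| + (K * |q j - Q| + (P + Q) ^ 2 * |v j - s|) := by ring

theorem variance_asymptotics_weighted_sum_general
    {Ω : Type*} [MeasurableSpace Ω] (P : Measure Ω) [IsProbabilityMeasure P]
    (a : ℤ → ℝ) (ha : Summable (fun i : ℤ => |a i|))
    (A : ℝ) (hA : A = ∑' i : ℤ, a i)
    (Ap Am : ℕ → ℝ)
    (hAp : ∀ n, Ap n = ∑ j ∈ Finset.range (n + 1), a j)
    (hAm : ∀ n, Am n = ∑ j ∈ Finset.range n, a (-(j + 1 : ℕ)))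
    (Z : ℕ → Ω → ℝ)
    (hL2 : ∀ k, MemLp (Z k) 2 P)
    (hindep : iIndepFun Z P)
    (σ : ℝ)
    (hVar : Tendsto (fun k => variance (Z k) P) atTop (𝓝 (σ ^ 2))) :
    Tendsto
      (fun m : ℕ =>
        variance (fun ω => ∑ k ∈ Finset.range (m + 1), (Ap (m - k) + Am k) * Z k ω) P
          / m)
      atTop (𝓝 (σ ^ 2 * A ^ 2)) := by
  have hpos : Summable (fun n : ℕ => a n) := ha.of_abs.comp_injective Nat.cast_injective
  have hneg : Summable (fun n : ℕ => a (-(n + 1 : ℕ))) :=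
    ha.of_abs.comp_injective fun x y h => by simpa using h
  have hAp_lim : Tendsto Ap atTop (𝓝 (∑' n : ℕ, a n)) := by
    rw [funext hAp]
    exact hpos.hasSum.tendsto_sum_nat.comp (tendsto_add_atTop_nat 1)
  have hAm_lim : Tendsto Am atTop (𝓝 (∑' n : ℕ, a (-(n + 1 : ℕ)))) := by
    rw [funext hAm]
    exact hneg.hasSum.tendsto_sum_nat
  have hA_split : A = ∑' n : ℕ, a n + ∑' n : ℕ, a (-(n + 1 : ℕ)) := by
    rw [hA, tsum_of_nat_of_neg_add_one hpos (by simpa using hneg)]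
    simp
  simp_rw [hindep.variance_sum_mul fun k _ => hL2 k]
  rw [hA_split, mul_comm]
  exact tendsto_sum_range_sq_add_mul_div hAp_lim hAm_lim hVar

/-- With absolutely summable coefficients summing to `A` and
independent random variables `(Z_k)` whose variances converge to `σ²` and whose
means are uniformly bounded,
`Var(∑_{k=0}^{m}(A⁺_{m-k} + A⁻_k) Z_k) ∼ m σ² A²` as `m → ∞`. -/
theorem variance_asymptotics_weighted_sum
    {Ω : Type*} [MeasurableSpace Ω] (P : Measure Ω) [IsProbabilityMeasure P]
    (a : ℤ → ℝ) (ha : Summable (fun i : ℤ => |a i|))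
    (A : ℝ) (hA : A = ∑' i : ℤ, a i)
    (Ap Am : ℕ → ℝ)
    (hAp : ∀ n, Ap n = ∑ j ∈ Finset.range (n + 1), a j)
    (hAm : ∀ n, Am n = ∑ j ∈ Finset.range n, a (-(j + 1 : ℕ)))
    (Z : ℕ → Ω → ℝ) (hmeas : ∀ k, Measurable (Z k))
    (hL2 : ∀ k, MemLp (Z k) 2 P)
    (hindep : iIndepFun Z P)
    (σ : ℝ)
    (hVar : Tendsto (fun k => variance (Z k) P) atTop (𝓝 (σ ^ 2)))
    (hMeanBdd : ∃ M : ℝ, ∀ k, |∫ ω, Z k ω ∂P| ≤ M) :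
    Tendsto
      (fun m : ℕ =>
        variance (fun ω => ∑ k ∈ Finset.range (m + 1), (Ap (m - k) + Am k) * Z k ω) P
          / m)
      atTop (𝓝 (σ ^ 2 * A ^ 2)) :=
  variance_asymptotics_weighted_sum_general P a ha A hA Ap Am hAp hAm Z hL2 hindep σ hVar
end

section
/- Let B be a standard Brownian motion and T₀ an independent standard exponential random variable. Then the random variable ∫_0^∞ 1(T₀ ≥ √2 B_t + t) dt is almost surely finite and has finite expectation. -/
/-!
By Tonelli, `E I = ∫₀^∞ P(√2 B_t + t ≤ T₀) dt`. Since `P(T₀ ≥ x) ≤ e^{-x/2}` and `T₀` is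
independent of `B_t ∼ N(0, t)`, each probability is at most
`E e^{-(√2 B_t + t)/2} = e^{-t/4}`, which is integrable on `[0, ∞)`;
a random variable with finite mean is almost surely finite.
-/

open MeasureTheory ProbabilityTheory Real
open scoped ENNReal NNReal

lemma lintegral_ofReal_exp_mul_gaussianReal (a m : ℝ) (v : ℝ≥0) :
    ∫⁻ x, ENNReal.ofReal (exp (a * x)) ∂gaussianReal m v
      = ENNReal.ofReal (exp (m * a + v * a ^ 2 / 2)) := by
  rw [← ofReal_integral_eq_lintegral_ofReal (integrable_exp_mul_gaussianReal a)
    (ae_of_all _ fun _ => (exp_pos _).le)]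
  exact congrArg ENNReal.ofReal (congrFun mgf_id_gaussianReal a)

lemma lintegral_ofReal_exp_neg_mul_Ici_lt_top {b : ℝ} (hb : 0 < b) :
    ∫⁻ t in Set.Ici 0, ENNReal.ofReal (exp (-b * t)) < ⊤ :=
  ((integrableOn_Ici_iff_integrableOn_Ioi).2 (exp_neg_integrableOn_Ioi 0 hb)).lintegral_lt_top

section

variable {Ω : Type*} [MeasurableSpace Ω] {P : Measure Ω}

/-- The tail is only known on open half-lines; halving the rate absorbs the passage to `x ≤ T`. -/
lemma measure_le_le_ofReal_exp_neg_half [IsProbabilityMeasure P] {T : Ω → ℝ}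
    (hT : ∀ x, 0 ≤ x → (P {ω | x < T ω}).toReal = exp (-x)) (x : ℝ) :
    P {ω | x ≤ T ω} ≤ ENNReal.ofReal (exp (-(1 / 2) * x)) := by
  rcases le_or_gt x 0 with hx | hx
  · exact prob_le_one.trans (ENNReal.one_le_ofReal.2 (one_le_exp (by nlinarith)))
  · calc P {ω | x ≤ T ω} ≤ P {ω | x / 2 < T ω} :=
          measure_mono fun ω (h : x ≤ T ω) => show x / 2 < T ω by linarith
      _ = ENNReal.ofReal (exp (-(1 / 2) * x)) := by
          rw [← ENNReal.ofReal_toReal (measure_ne_top P {ω | x / 2 < T ω}),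
            hT _ (by positivity)]
          ring_nf

lemma measure_le_le_of_indepFun_gaussianReal [IsFiniteMeasure P] {X T : Ω → ℝ} {m a : ℝ}
    {v : ℝ≥0}
    (hX : HasLaw X (gaussianReal m v) P) (hT : AEMeasurable T P) (hXT : IndepFun X T P)
    (htail : ∀ x, P {ω | x ≤ T ω} ≤ ENNReal.ofReal (exp (a * x))) :
    P {ω | X ω ≤ T ω} ≤ ENNReal.ofReal (exp (m * a + v * a ^ 2 / 2)) := by
  have hle : MeasurableSet {p : ℝ × ℝ | p.1 ≤ p.2} :=
    measurableSet_le measurable_fst measurable_snd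
  have hXT_law := hXT.hasLaw_prod hX ⟨hT, rfl⟩
  calc P {ω | X ω ≤ T ω}
      = ∫⁻ x, P.map T (Set.Ici x) ∂gaussianReal m v := by
        rw [hXT_law.measure_eq (p := fun p => p.1 ≤ p.2) hle, Measure.prod_apply hle]
        rfl
    _ = ∫⁻ x, P {ω | x ≤ T ω} ∂gaussianReal m v := by
        simp_rw [Measure.map_apply_of_aemeasurable hT measurableSet_Ici]
        rfl
    _ ≤ ∫⁻ x, ENNReal.ofReal (exp (a * x)) ∂gaussianReal m v := lintegral_mono htail
    _ = _ := lintegral_ofReal_exp_mul_gaussianReal a m v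

lemma lintegral_volume_slice_lt_top [SFinite P] {S : Set (ℝ × Ω)} (hS : MeasurableSet S)
    (hS₀ : ∀ p ∈ S, 0 ≤ p.1) {b : ℝ} (hb : 0 < b)
    (hdecay : ∀ t, 0 ≤ t → P (Prod.mk t ⁻¹' S) ≤ ENNReal.ofReal (exp (-b * t))) :
    ∫⁻ ω, volume ((fun t => (t, ω)) ⁻¹' S) ∂P < ⊤ := by
  have hslice : ∀ t, P (Prod.mk t ⁻¹' S)
      ≤ (Set.Ici 0).indicator (fun t => ENNReal.ofReal (exp (-b * t))) t := by
    intro t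
    by_cases ht : 0 ≤ t
    · simpa [Set.indicator_of_mem (Set.mem_Ici.2 ht)] using hdecay t ht
    · have : Prod.mk t ⁻¹' S = ∅ := Set.eq_empty_of_forall_notMem fun ω h => ht (hS₀ _ h)
      simp [this]
  calc ∫⁻ ω, volume ((fun t => (t, ω)) ⁻¹' S) ∂P
      = ∫⁻ t, P (Prod.mk t ⁻¹' S) := by
        rw [← Measure.prod_apply_symm hS, Measure.prod_apply hS]
    _ ≤ ∫⁻ t in Set.Ici 0, ENNReal.ofReal (exp (-b * t)) := by
        rw [← lintegral_indicator measurableSet_Ici]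
        exact lintegral_mono hslice
    _ < ⊤ := lintegral_ofReal_exp_neg_mul_Ici_lt_top hb

/-- `a = -1/2` minimises the Chernoff exponent `t * a + t * a ^ 2` of `√2 X + t`. -/
lemma measure_sqrt_two_mul_add_le_le [IsProbabilityMeasure P] {X T : Ω → ℝ} {t : ℝ}
    (ht : 0 ≤ t) (hX : HasLaw X (gaussianReal 0 t.toNNReal) P) (hT : AEMeasurable T P)
    (hXT : IndepFun X T P) (hT_tail : ∀ x, 0 ≤ x → (P {ω | x < T ω}).toReal = exp (-x)) :
    P {ω | √2 * X ω + t ≤ T ω} ≤ ENNReal.ofReal (exp (-(1 / 4) * t)) := by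
  have hY := gaussianReal_add_const (gaussianReal_const_mul hX √2) t
  have hYT : IndepFun (fun ω => √2 * X ω + t) T P :=
    hXT.comp (φ := fun x => √2 * x + t) (by fun_prop) measurable_id
  refine (measure_le_le_of_indepFun_gaussianReal hY hT hYT
    (measure_le_le_ofReal_exp_neg_half hT_tail)).trans_eq ?_
  congr 2
  simp [Real.coe_toNNReal _ ht]
  ring

end

theorem occupation_time_finite_general
    {Ω : Type*} [MeasurableSpace Ω] (P : Measure Ω) [IsProbabilityMeasure P]
    (B : ℝ → Ω → ℝ)
    (hBmeas : Measurable (fun p : ℝ × Ω => B p.1 p.2))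
    (hB0 : ∀ᵐ ω ∂P, B 0 ω = 0)
    -- Gaussian increments
    (hGauss : ∀ s t : ℝ, 0 ≤ s → s ≤ t →
      Measure.map (fun ω => B t ω - B s ω) P
        = ProbabilityTheory.gaussianReal 0 (Real.toNNReal (t - s)))
    -- `T₀` standard exponential, independent of the whole path of `B`
    (T₀ : Ω → ℝ) (hT₀meas : Measurable T₀)
    (hT₀ : ∀ x : ℝ, 0 ≤ x → (P {ω | x < T₀ ω}).toReal = Real.exp (-x))
    (hT₀indep : IndepFun T₀ (fun ω => fun t : ℝ => B t ω) P)
    (I : Ω → ENNReal)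
    (hI : ∀ ω, I ω =
      MeasureTheory.volume {t : ℝ | 0 ≤ t ∧ Real.sqrt 2 * B t ω + t ≤ T₀ ω}) :
    (∀ᵐ ω ∂P, I ω < ⊤) ∧ (∫⁻ ω, I ω ∂P) < ⊤ := by
  have hBt : ∀ t, Measurable (B t) := fun t => hBmeas.comp measurable_prodMk_left
  have hB_law : ∀ t, 0 ≤ t → HasLaw (B t) (gaussianReal 0 t.toNNReal) P := fun t ht =>
    (HasLaw.mk (X := fun ω => B t ω - B 0 ω) (by fun_prop)
      (by simpa using hGauss 0 t le_rfl ht)).congr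
      (by filter_upwards [hB0] with ω h; simp [h])
  set S : Set (ℝ × Ω) := {p | 0 ≤ p.1 ∧ √2 * B p.1 p.2 + p.1 ≤ T₀ p.2}
  have hS : MeasurableSet S := measurable_fst measurableSet_Ici |>.inter <|
    measurableSet_le ((hBmeas.const_mul _).add measurable_fst) (hT₀meas.comp measurable_snd)
  have hdecay : ∀ t, 0 ≤ t → P (Prod.mk t ⁻¹' S) ≤ ENNReal.ofReal (exp (-(1 / 4) * t)) :=
    fun t ht => (measure_mono fun ω h => h.2).trans <|
      measure_sqrt_two_mul_add_le_le ht (hB_law t ht) hT₀meas.aemeasurable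
        (hT₀indep.symm.comp (measurable_pi_apply t) measurable_id) hT₀
  have hI_eq : I = fun ω => volume ((fun t => (t, ω)) ⁻¹' S) := funext hI
  have hfin := lintegral_volume_slice_lt_top hS (fun p hp => hp.1) (by norm_num) hdecay
  rw [hI_eq]
  exact ⟨ae_lt_top (measurable_measure_prodMk_right hS) hfin.ne, hfin⟩

/-- If `B` is a standard Brownian motion and `T₀` an independent
standard exponential random variable, then the occupation time
`∫_0^∞ 1(T₀ ≥ √2 B_t + t) dt` (the Lebesgue measure of
`{t ≥ 0 : √2 B_t + t ≤ T₀}`) is almost surely finite and has finite expectation. -/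
theorem occupation_time_finite
    {Ω : Type*} [MeasurableSpace Ω] (P : Measure Ω) [IsProbabilityMeasure P]
    (B : ℝ → Ω → ℝ)
    (hBmeas : Measurable (fun p : ℝ × Ω => B p.1 p.2))
    (hB0 : ∀ᵐ ω ∂P, B 0 ω = 0)
    -- Gaussian increments
    (hGauss : ∀ s t : ℝ, 0 ≤ s → s ≤ t →
      Measure.map (fun ω => B t ω - B s ω) P
        = ProbabilityTheory.gaussianReal 0 (Real.toNNReal (t - s)))
    -- independent increments
    (hIncr : ∀ (n : ℕ) (t : Fin (n + 1) → ℝ), (∀ i, 0 ≤ t i) → Monotone t →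
      iIndepFun
        (fun (i : Fin n) ω => B (t i.succ) ω - B (t i.castSucc) ω) P)
    -- `T₀` standard exponential, independent of the whole path of `B`
    (T₀ : Ω → ℝ) (hT₀meas : Measurable T₀)
    (hT₀ : ∀ x : ℝ, 0 ≤ x → (P {ω | x < T₀ ω}).toReal = Real.exp (-x))
    (hT₀indep : IndepFun T₀ (fun ω => fun t : ℝ => B t ω) P)
    (I : Ω → ENNReal)
    (hI : ∀ ω, I ω =
      MeasureTheory.volume {t : ℝ | 0 ≤ t ∧ Real.sqrt 2 * B t ω + t ≤ T₀ ω}) :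
    (∀ᵐ ω ∂P, I ω < ⊤) ∧ (∫⁻ ω, I ω ∂P) < ⊤ :=
  occupation_time_finite_general P B hBmeas hB0 hGauss T₀ hT₀meas hT₀ hT₀indep I hI
end
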